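/- Let κ be an uncountable regular cardinal with κ^{<κ} = κ and S ⊆ lim(κ). Then E_S is Borel reducible to E_0 on κ^κ: there is a continuous function f : 2^κ → κ^κ such that η E_S ξ iff {α : f(η)(α) ≠ f(ξ)(α)} is bounded in κ. Here E_S = E_S^* ∩ E_0, where η E_S^* ξ iff for all α ∈ S there is β < α with η△ξ constant on (β,α), and η E_0 ξ iff η△ξ has bounded support. -/

import Mathlib

/-!
The paper codes the `∼`-class of `η ↾ i` by a single ordinal, which is where `κ^{<κ} = κ` enters.
Instead, record the class bit by bit. Fix a representative of every class of `∼ᵢ` (`η ∼ᵢ ξ` iff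
`η △ ξ` is eventually constant below `i`) and a map `γ ↦ (i, δ)` from `κ` onto `κ × κ` all of
whose fibres are unbounded, and let `f η γ` encode `η γ` together with bit `δ` of the
representative of the `∼ᵢ`-class of `η` (for `i ∈ S`). If `f η` and `f ξ` agree on a tail, then
`η E₀ ξ`, and since every pair `(i, δ)` occurs in that tail, `η` and `ξ` have the same
representatives, i.e. `η ∼ᵢ ξ` for all `i ∈ S`; the converse is immediate. Each `f η γ` depends
only on `η ↾ max (γ + 1) i`, so by regularity `f η ↾ α` depends on a bounded part of `η` for every
`α < κ`, which is continuity.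
-/

open Cardinal Set
open scoped Classical

noncomputable section

/-- The bounded topology on the generalized Cantor space `2^κ` (functions `Ordinal → X`,
where only values below `κ` matter), generated by the basic open sets
`N_p = {η | η↾α = p}` for `α < κ`. -/
def gbTop (κ : Cardinal) (X : Type*) : TopologicalSpace (Ordinal → X) :=
  TopologicalSpace.generateFrom
    {s | ∃ α < κ.ord, ∃ p : Ordinal → X, s = {η | ∀ β < α, η β = p β}}

/-- `E_0`: equality modulo bounded sets (below `κ`). -/
def E0 (κ : Cardinal) (η ξ : Ordinal → Bool) : Prop :=
  ∃ α < κ.ord, ∀ β, α ≤ β → β < κ.ord → η β = ξ β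

/-- `E_S^*`: for every `α ∈ S` the symmetric difference `η △ ξ` is eventually constant
below `α`. -/
def EStar (S : Set Ordinal) (η ξ : Ordinal → Bool) : Prop :=
  ∀ α ∈ S, ∃ β < α, ∃ b : Bool, ∀ γ, β < γ → γ < α → xor (η γ) (ξ γ) = b

open Filter Topology

universe u v

theorem Cardinal.IsRegular.exists_lt_ord_forall_le {κ : Cardinal.{u}} (hκ : κ.IsRegular)
    {α : Ordinal.{u}} (hα : α < κ.ord) {d : Ordinal.{u} → Ordinal.{u}}
    (hd : ∀ γ < α, d γ < κ.ord) : ∃ B < κ.ord, ∀ γ < α, d γ ≤ B := by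
  have hd' : ∀ x ∈ d '' Iio α, x < κ.ord := by
    rintro _ ⟨γ, hγ, rfl⟩
    exact hd γ hγ
  have hcard : #(d '' Iio α) < (Ordinal.lift.{u + 1} κ.ord).cof := by
    rw [← Ordinal.lift_cof, hκ.cof_ord]
    calc #(d '' Iio α) ≤ #(Iio α) := mk_image_le
      _ = Cardinal.lift α.card := mk_Iio_ordinal α
      _ < Cardinal.lift κ := lift_lt.2 (lt_ord.1 hα)
  exact ⟨sSup (d '' Iio α), Ordinal.sSup_lt_of_lt_cof hcard hd',
    fun γ hγ => le_csSup ⟨κ.ord, fun x hx => (hd' x hx).le⟩ ⟨γ, hγ, rfl⟩⟩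

theorem continuous_gbTop_of_forall_exists {κ : Cardinal.{u}} (hκ : κ.IsRegular) {X Y : Type*}
    {F : (Ordinal.{u} → X) → Ordinal.{u} → Y}
    (hF : ∀ γ < κ.ord, ∃ d < κ.ord, ∀ η ξ, (∀ δ < d, η δ = ξ δ) → F η γ = F ξ γ) :
    Continuous[gbTop κ X, gbTop κ Y] F := by
  refine continuous_generateFrom_iff.2 ?_
  rintro _ ⟨α, hα, p, rfl⟩
  let := gbTop κ X
  choose! d hdκ hd using hF
  obtain ⟨B, hBκ, hdB⟩ := hκ.exists_lt_ord_forall_le hα fun γ hγ => hdκ γ (hγ.trans hα)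
  refine isOpen_iff_forall_mem_open.2 fun η hη =>
    ⟨{ξ | ∀ δ < B, ξ δ = η δ}, fun ξ hξ β hβ => ?_,
      TopologicalSpace.isOpen_generateFrom_of_mem ⟨B, hBκ, η, rfl⟩, fun _ _ => rfl⟩
  rw [hd β (hβ.trans hα) ξ η fun δ hδ => hξ δ (hδ.trans_le (hdB β hβ))]
  exact hη β hβ

theorem exists_pairing_fibers_unbounded {κ : Cardinal.{u}} (hκ : ℵ₀ ≤ κ) :
    ∃ g : Ordinal.{u} → Ordinal.{u} × Ordinal.{u},
      MapsTo g (Iio κ.ord) (Iio κ.ord ×ˢ Iio κ.ord) ∧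
      ∀ p ∈ Iio κ.ord ×ˢ Iio κ.ord, ∀ α < κ.ord, ∃ γ ∈ Ico α κ.ord, g γ = p := by
  have hmk : #(Iio κ.ord) = Cardinal.lift.{u + 1} κ := by rw [mk_Iio_ordinal, card_ord]
  obtain ⟨e⟩ : Nonempty (Iio κ.ord ≃ (Iio κ.ord × Iio κ.ord) × Iio κ.ord) := by
    refine Cardinal.eq.1 ?_
    simp only [mk_prod, Cardinal.lift_id, hmk, mul_eq_self (aleph0_le_lift.2 hκ)]
  let g : Ordinal.{u} → Ordinal.{u} × Ordinal.{u} := fun γ =>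
    if h : γ < κ.ord then ((e ⟨γ, h⟩).1.1, (e ⟨γ, h⟩).1.2) else (0, 0)
  have hg : ∀ x : Iio κ.ord, g x = (((e x).1.1 : Ordinal), ((e x).1.2 : Ordinal)) :=
    fun x => dif_pos x.2
  refine ⟨g, fun γ hγ => ?_, ?_⟩
  · rw [hg ⟨γ, hγ⟩]
    exact ⟨(e _).1.1.2, (e _).1.2.2⟩
  rintro ⟨i, δ⟩ ⟨hi, hδ⟩ α hα
  by_contra! hfib
  -- then the `κ` points `e.symm ((i, δ), t)` of the fibre over `(i, δ)` all lie below `α`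
  have hlt : ∀ t, (e.symm ((⟨i, hi⟩, ⟨δ, hδ⟩), t) : Ordinal) < α := fun t => by
    by_contra! hle
    exact hfib _ ⟨hle, (e.symm _).2⟩ (by rw [hg, Equiv.apply_symm_apply])
  have hinj : Function.Injective fun t => (⟨e.symm ((⟨i, hi⟩, ⟨δ, hδ⟩), t), hlt t⟩ : Iio α) :=
    fun t t' h => by simpa using e.symm.injective (Subtype.ext (Subtype.mk.inj h))
  have hle := mk_le_of_injective hinj
  rw [hmk, mk_Iio_ordinal, Cardinal.lift_le] at hle
  exact (lt_ord.1 hα).not_ge hle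

def evConstSetoid (i : Ordinal.{u}) : Setoid (Ordinal.{u} → Bool) where
  r η ξ := ∃ b, ∀ᶠ γ in 𝓝[<] i, xor (η γ) (ξ γ) = b
  iseqv := by
    refine ⟨fun η => ⟨false, by simp⟩,
      fun ⟨b, h⟩ => ⟨b, h.mono fun γ hγ => by rw [Bool.xor_comm, hγ]⟩, ?_⟩
    rintro η ξ ζ ⟨b, h⟩ ⟨c, h'⟩
    exact ⟨xor b c, (h.and h').mono fun γ ⟨hγ, hγ'⟩ => by
      rw [← hγ, ← hγ']; cases η γ <;> cases ξ γ <;> cases ζ γ <;> rfl⟩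

section evConstSetoid

variable {i : Ordinal.{u}} {η ξ : Ordinal.{u} → Bool}

theorem evConstSetoid_iff (hi : i ≠ 0) :
    evConstSetoid i η ξ ↔ ∃ β < i, ∃ b, ∀ γ, β < γ → γ < i → xor (η γ) (ξ γ) = b := by
  change (∃ b, _) ↔ _
  simp_rw [Filter.Eventually, mem_nhdsLT_iff_exists_Ioo_subset' (pos_iff_ne_zero.2 hi)]
  constructor
  · rintro ⟨b, β, hβ, hsub⟩
    exact ⟨β, hβ, b, fun γ h1 h2 => hsub ⟨h1, h2⟩⟩
  · rintro ⟨β, hβ, b, h⟩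
    exact ⟨b, β, hβ, fun γ hγ => h γ hγ.1 hγ.2⟩

theorem eStar_iff {S : Set Ordinal.{u}} (hS : 0 ∉ S) :
    EStar S η ξ ↔ ∀ i ∈ S, evConstSetoid i η ξ :=
  forall₂_congr fun _ hi => (evConstSetoid_iff (ne_of_mem_of_not_mem hi hS)).symm

theorem evConstSetoid_of_eqOn (h : ∀ γ < i, η γ = ξ γ) : evConstSetoid i η ξ :=
  ⟨false, eventually_nhdsWithin_of_forall fun γ hγ => by rw [h γ hγ]; simp⟩

def rep (i : Ordinal.{u}) (η : Ordinal.{u} → Bool) : Ordinal.{u} → Bool :=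
  (Quotient.mk (evConstSetoid i) η).out

theorem rep_eq_rep_iff : rep i η = rep i ξ ↔ evConstSetoid i η ξ :=
  Quotient.out_inj.trans Quotient.eq

theorem evConstSetoid_of_rep_eqOn (h : ∀ δ < i, rep i η δ = rep i ξ δ) :
    evConstSetoid i η ξ :=
  Setoid.trans' _ (Setoid.symm' _ (Quotient.mk_out η))
    (Setoid.trans' _ (evConstSetoid_of_eqOn h) (Quotient.mk_out ξ))

end evConstSetoid

section reduction

variable (g : Ordinal.{u} → Ordinal.{u} × Ordinal.{u}) (S : Set Ordinal.{u})

def codeBit (η : Ordinal.{u} → Bool) (γ : Ordinal.{u}) : Bool :=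
  if (g γ).1 ∈ S then rep (g γ).1 η (g γ).2 else false

def reduction (η : Ordinal.{u} → Bool) (γ : Ordinal.{u}) : Ordinal.{v} :=
  Encodable.encode (η γ, codeBit g S η γ)

variable {g S} {κ : Cardinal.{u}} {η ξ : Ordinal.{u} → Bool} {γ : Ordinal.{u}}

theorem reduction_eq_reduction_iff :
    reduction.{u, v} g S η γ = reduction g S ξ γ ↔
      η γ = ξ γ ∧ codeBit g S η γ = codeBit g S ξ γ := by
  rw [reduction, reduction, Nat.cast_inj, Encodable.encode_inj, Prod.mk.injEq]

theorem codeBit_eq_of_evConstSetoid (h : (g γ).1 ∈ S → evConstSetoid (g γ).1 η ξ) :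
    codeBit g S η γ = codeBit g S ξ γ := by
  unfold codeBit
  split_ifs with hS
  · rw [rep_eq_rep_iff.2 (h hS)]
  · rfl

theorem continuous_reduction (hκ : κ.IsRegular)
    (hg : MapsTo g (Iio κ.ord) (Iio κ.ord ×ˢ Iio κ.ord)) :
    Continuous[gbTop κ Bool, gbTop κ Ordinal.{v}] (reduction g S) :=
  continuous_gbTop_of_forall_exists hκ fun γ hγ =>
    ⟨max (γ + 1) (g γ).1, max_lt ((isSuccLimit_ord hκ.aleph0_le).add_one_lt hγ) (hg hγ).1,
      fun _ _ h => reduction_eq_reduction_iff.2 ⟨h γ (lt_max_of_lt_left (lt_add_one γ)),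
        codeBit_eq_of_evConstSetoid fun _ =>
          evConstSetoid_of_eqOn fun δ hδ => h δ (lt_max_of_lt_right hδ)⟩⟩

theorem evConstSetoid_and_E0_iff_reduction (hS : S ⊆ Iio κ.ord)
    (hg : ∀ p ∈ Iio κ.ord ×ˢ Iio κ.ord, ∀ α < κ.ord, ∃ γ ∈ Ico α κ.ord, g γ = p) :
    ((∀ i ∈ S, evConstSetoid i η ξ) ∧ E0 κ η ξ) ↔
      ∃ α < κ.ord, ∀ β, α ≤ β → β < κ.ord → reduction.{u, v} g S η β = reduction g S ξ β := by
  constructor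
  · rintro ⟨hrel, α, hα, hE⟩
    exact ⟨α, hα, fun β hαβ hβ => reduction_eq_reduction_iff.2
      ⟨hE β hαβ hβ, codeBit_eq_of_evConstSetoid (hrel _)⟩⟩
  rintro ⟨α, hα, h⟩
  refine ⟨fun i hi => evConstSetoid_of_rep_eqOn fun δ hδ => ?_,
    α, hα, fun β hαβ hβ => (reduction_eq_reduction_iff.1 (h β hαβ hβ)).1⟩
  obtain ⟨γ, ⟨hαγ, hγ⟩, hgγ⟩ := hg (i, δ) ⟨hS hi, hδ.trans (hS hi)⟩ α hα
  simpa [codeBit, hgγ, hi] using (reduction_eq_reduction_iff.1 (h γ hαγ hγ)).2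

end reduction

theorem ES_reducible_to_E0_general (κ : Cardinal) (hreg : κ.IsRegular) (S : Set Ordinal)
    (hS : S ⊆ {α | α < κ.ord ∧ Order.IsSuccLimit α}) :
    ∃ f : (Ordinal → Bool) → (Ordinal → Ordinal),
      @Continuous _ _ (gbTop κ Bool) (gbTop κ Ordinal) f ∧
      ∀ η ξ, (EStar S η ξ ∧ E0 κ η ξ) ↔
        (∃ α < κ.ord, ∀ β, α ≤ β → β < κ.ord → f η β = f ξ β) := by
  obtain ⟨g, hg_maps, hg_fibers⟩ := exists_pairing_fibers_unbounded hreg.aleph0_le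
  have hS0 : 0 ∉ S := fun h => (hS h).2.ne_bot rfl
  refine ⟨reduction g S, continuous_reduction hreg hg_maps, fun _ _ => ?_⟩
  rw [eStar_iff hS0]
  exact evConstSetoid_and_E0_iff_reduction (fun i hi => (hS hi).1) hg_fibers

/-- `E_S = E_S^* ∩ E_0` is reducible to `E_0` on `κ^κ` via a continuous
function. -/
theorem ES_reducible_to_E0 (κ : Cardinal) (hreg : κ.IsRegular) (hunc : ℵ₀ < κ)
    (hpow : κ ^< κ = κ) (S : Set Ordinal)
    (hS : S ⊆ {α | α < κ.ord ∧ Order.IsSuccLimit α}) :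
    ∃ f : (Ordinal → Bool) → (Ordinal → Ordinal),
      @Continuous _ _ (gbTop κ Bool) (gbTop κ Ordinal) f ∧
      ∀ η ξ, (EStar S η ξ ∧ E0 κ η ξ) ↔
        (∃ α < κ.ord, ∀ β, α ≤ β → β < κ.ord → f η β = f ξ β) :=
  ES_reducible_to_E0_general κ hreg S hS
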